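/- arXiv:math/0604608 — 6 statements merged into one kernel-verified Lean document; each statement's English description precedes it below -/
import Mathlib

section
/- Let g be a real Lie algebra and ω : g → g* a skew-symmetric linear isomorphism. The endomorphism J_ω(x,α) = (-ω⁻¹(α), ω(x)) of the cotangent Lie algebra T*g satisfies the integrability condition N_{J_ω} ≡ 0 (with respect to the cotangent Lie bracket) if and only if ω([x,y]) = ω(x)∘ad(y) - ω(y)∘ad(x) for all x,y ∈ g, i.e. if and only if the 2-form (x,y) ↦ ω(x)(y) is a closed (symplectic) 2-form on g. -/
/-! `J_ω` is integrable exactly when `ω` is a 1-cocycle of `g` with values in the coadjoint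
representation: writing `D(x,y) = ω[x,y] - (ω(x)∘ad y - ω(y)∘ad x)`, a direct computation gives
`N_{J_ω}((x, ω a), (y, ω b)) = (ω⁻¹(D(x,y) - D(a,b)), -(D(a,y) + D(x,b)))`,
which vanishes for all arguments iff `D ≡ 0`. For skew `ω`, `D(x,y)(z)` is the cyclic sum
`Ω([x,y],z) + Ω([y,z],x) + Ω([z,x],y)`. -/

open LieAlgebra

/-- The cotangent Lie bracket on `g ⊕ g*`. -/
def ctb {L : Type*} [LieRing L] [LieAlgebra ℝ L]
    (u v : L × Module.Dual ℝ L) : L × Module.Dual ℝ L :=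
  (⁅u.1, v.1⁆, -(v.2.comp (ad ℝ L u.1)) + u.2.comp (ad ℝ L v.1))

/-- The Nijenhuis tensor of an endomorphism `J` of the cotangent Lie algebra. -/
def nij {L : Type*} [LieRing L] [LieAlgebra ℝ L]
    (J : L × Module.Dual ℝ L → L × Module.Dual ℝ L)
    (u v : L × Module.Dual ℝ L) : L × Module.Dual ℝ L :=
  ctb u v + J (ctb (J u) v) + J (ctb u (J v)) - ctb (J u) (J v)

/-- The endomorphism `J_ω(x,α) = (-ω⁻¹(α), ω(x))` of `g ⊕ g*`. -/
noncomputable def Jom {L : Type*} [LieRing L] [LieAlgebra ℝ L]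
    (ω : L ≃ₗ[ℝ] Module.Dual ℝ L) (u : L × Module.Dual ℝ L) :
    L × Module.Dual ℝ L := (-(ω.symm u.2), ω u.1)

section CocycleDefect

variable {R L : Type*} [CommRing R] [LieRing L] [LieAlgebra R L]

def cocycleDefect (ω : L →ₗ[R] Module.Dual R L) (x y : L) : Module.Dual R L :=
  ω ⁅x, y⁆ - ((ω x).comp (ad R L y) - (ω y).comp (ad R L x))

variable (ω : L →ₗ[R] Module.Dual R L)

@[simp]
lemma cocycleDefect_zero_left (y : L) : cocycleDefect ω 0 y = 0 := by
  ext z; simp [cocycleDefect]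

lemma cocycleDefect_eq_zero_iff (x y : L) :
    cocycleDefect ω x y = 0 ↔ ω ⁅x, y⁆ = (ω x).comp (ad R L y) - (ω y).comp (ad R L x) :=
  sub_eq_zero

lemma cocycleDefect_apply_of_skew (hskew : ∀ x y : L, ω x y = -(ω y x)) (x y z : L) :
    cocycleDefect ω x y z = ω ⁅x, y⁆ z + ω ⁅y, z⁆ x + ω ⁅z, x⁆ y := by
  simp only [cocycleDefect, LinearMap.sub_apply, LinearMap.comp_apply, ad_apply, ← lie_skew z x,
    map_neg, LinearMap.neg_apply, hskew x ⁅y, z⁆, hskew y ⁅x, z⁆]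
  ring

end CocycleDefect

section Nijenhuis

variable {L : Type*} [LieRing L] [LieAlgebra ℝ L] (ω : L ≃ₗ[ℝ] Module.Dual ℝ L)

lemma nij_Jom_mk (x a y b : L) :
    nij (Jom ω) (x, ω a) (y, ω b) =
      (ω.symm (cocycleDefect ω.toLinearMap x y - cocycleDefect ω.toLinearMap a b),
        -(cocycleDefect ω.toLinearMap a y + cocycleDefect ω.toLinearMap x b)) := by
  simp only [nij, ctb, Jom, cocycleDefect, LinearEquiv.coe_coe, LinearEquiv.symm_apply_apply,
    map_neg, map_add, map_sub, LinearMap.comp_neg, neg_lie, lie_neg, Prod.mk_add_mk,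
    Prod.mk_sub_mk, Prod.mk.injEq]
  constructor <;> abel

lemma nij_Jom_eq_zero_iff :
    (∀ u v : L × Module.Dual ℝ L, nij (Jom ω) u v = 0) ↔
      ∀ x y : L, cocycleDefect ω.toLinearMap x y = 0 := by
  constructor
  · intro h x b
    simpa only [nij_Jom_mk, cocycleDefect_zero_left, zero_add, Prod.snd_zero, neg_eq_zero]
      using congrArg Prod.snd (h (x, ω 0) (0, ω b))
  · rintro h ⟨x, α⟩ ⟨y, β⟩
    obtain ⟨a, rfl⟩ := ω.surjective α
    obtain ⟨b, rfl⟩ := ω.surjective β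
    simp [nij_Jom_mk, h]

end Nijenhuis

theorem Jom_integrable_iff_symplectic_general
    (L : Type*) [LieRing L] [LieAlgebra ℝ L]
    (ω : L ≃ₗ[ℝ] Module.Dual ℝ L)
    (hskew : ∀ x y : L, ω x y = -(ω y x)) :
    ((∀ u v : L × Module.Dual ℝ L, nij (Jom ω) u v = 0) ↔
      (∀ x y : L, ω ⁅x, y⁆ =
        (ω x).comp (ad ℝ L y) - (ω y).comp (ad ℝ L x))) ∧
    ((∀ u v : L × Module.Dual ℝ L, nij (Jom ω) u v = 0) ↔
      (∀ x y z : L, ω ⁅x, y⁆ z + ω ⁅y, z⁆ x + ω ⁅z, x⁆ y = 0)) := by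
  rw [nij_Jom_eq_zero_iff]
  refine ⟨forall₂_congr fun x y => cocycleDefect_eq_zero_iff _ x y,
    forall₂_congr fun x y => ?_⟩
  simp only [LinearMap.ext_iff, cocycleDefect_apply_of_skew _ hskew, LinearMap.zero_apply,
    LinearEquiv.coe_coe]

/-- For a skew-symmetric isomorphism `ω : g → g*`, the endomorphism `J_ω` is
integrable iff `ω([x,y]) = ω(x)∘ad(y) - ω(y)∘ad(x)`, iff the associated 2-form
`Ω(x,y) = ω(x)(y)` is closed (i.e. symplectic). -/
theorem Jom_integrable_iff_symplectic
    (L : Type*) [LieRing L] [LieAlgebra ℝ L] [FiniteDimensional ℝ L]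
    (ω : L ≃ₗ[ℝ] Module.Dual ℝ L)
    (hskew : ∀ x y : L, ω x y = -(ω y x)) :
    ((∀ u v : L × Module.Dual ℝ L, nij (Jom ω) u v = 0) ↔
      (∀ x y : L, ω ⁅x, y⁆ =
        (ω x).comp (ad ℝ L y) - (ω y).comp (ad ℝ L x))) ∧
    ((∀ u v : L × Module.Dual ℝ L, nij (Jom ω) u v = 0) ↔
      (∀ x y z : L, ω ⁅x, y⁆ z + ω ⁅y, z⁆ x + ω ⁅z, x⁆ y = 0)) :=
  Jom_integrable_iff_symplectic_general L ω hskew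
end

section
/- Let g be a real Lie algebra and j : g → g an endomorphism with j² = -id. Define J_j on T*g = g ⊕ g* by J_j(x,α) = (j(x), -α∘j). Then J_j² = -id, J_j is orthogonal with respect to the standard bilinear form ⟨(x,α),(y,β)⟩ = (1/2)(β(x)+α(y)), and if j satisfies the integrability condition N_j ≡ 0 on g, then J_j satisfies N_{J_j} ≡ 0 on the cotangent Lie algebra T*g. -/
open LieAlgebra

/-- The standard bilinear form `⟨(x,α),(y,β)⟩ = (1/2)(β(x) + α(y))`. -/
noncomputable def ctf {L : Type*} [LieRing L] [LieAlgebra ℝ L]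
    (u v : L × Module.Dual ℝ L) : ℝ := (v.2 u.1 + u.2 v.1) / 2

/-- The endomorphism `J_j(x,α) = (j(x), -α∘j)` of `g ⊕ g*` induced by an almost
complex structure `j` on `g`. -/
def Jcx {L : Type*} [LieRing L] [LieAlgebra ℝ L]
    (j : L →ₗ[ℝ] L) (u : L × Module.Dual ℝ L) : L × Module.Dual ℝ L :=
  (j u.1, -(u.2.comp j))

section CotangentComplexStructure

variable {L : Type*} [LieRing L] [LieAlgebra ℝ L]

def lieNijenhuis (j : L →ₗ[ℝ] L) (x y : L) : L :=
  ⁅x, y⁆ + j ⁅j x, y⁆ + j ⁅x, j y⁆ - ⁅j x, j y⁆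

theorem Jcx_Jcx {j : L →ₗ[ℝ] L} (hj : ∀ x : L, j (j x) = -x)
    (u : L × Module.Dual ℝ L) : Jcx j (Jcx j u) = -u := by
  refine Prod.ext (by simp [Jcx, hj]) (LinearMap.ext fun z => ?_)
  simp [Jcx, hj]

theorem ctf_Jcx_Jcx {j : L →ₗ[ℝ] L} (hj : ∀ x : L, j (j x) = -x)
    (u v : L × Module.Dual ℝ L) : ctf (Jcx j u) (Jcx j v) = ctf u v := by
  simp [Jcx, ctf, hj]

theorem nij_Jcx_fst (j : L →ₗ[ℝ] L) (u v : L × Module.Dual ℝ L) :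
    (nij (Jcx j) u v).1 = lieNijenhuis j u.1 v.1 := by
  simp [nij, ctb, Jcx, lieNijenhuis]

theorem nij_Jcx_snd_apply (j : L →ₗ[ℝ] L) (u v : L × Module.Dual ℝ L) (z : L) :
    (nij (Jcx j) u v).2 z = u.2 (lieNijenhuis j v.1 z) - v.2 (lieNijenhuis j u.1 z) := by
  simp only [nij, ctb, Jcx, lieNijenhuis, Prod.snd_add, Prod.snd_sub,
    LinearMap.add_apply, LinearMap.sub_apply, LinearMap.neg_apply, LinearMap.comp_apply,
    ad_apply, map_add, map_sub, neg_neg]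
  ring

theorem nij_Jcx_eq_zero {j : L →ₗ[ℝ] L} (hN : ∀ x y : L, lieNijenhuis j x y = 0)
    (u v : L × Module.Dual ℝ L) : nij (Jcx j) u v = 0 :=
  Prod.ext (by rw [nij_Jcx_fst, hN]; rfl)
    (LinearMap.ext fun z => by simp [nij_Jcx_snd_apply, hN])

end CotangentComplexStructure

theorem Jcx_hermitian_general
    (L : Type*) [LieRing L] [LieAlgebra ℝ L]
    (j : L →ₗ[ℝ] L) (hj : ∀ x : L, j (j x) = -x) :
    (∀ u : L × Module.Dual ℝ L, Jcx j (Jcx j u) = -u) ∧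
    (∀ u v : L × Module.Dual ℝ L, ctf (Jcx j u) (Jcx j v) = ctf u v) ∧
    ((∀ x y : L, ⁅x, y⁆ + j ⁅j x, y⁆ + j ⁅x, j y⁆ - ⁅j x, j y⁆ = 0) →
      ∀ u v : L × Module.Dual ℝ L, nij (Jcx j) u v = 0) :=
  ⟨Jcx_Jcx hj, ctf_Jcx_Jcx hj, nij_Jcx_eq_zero⟩

/-- For `j` with `j² = -id`, `J_j` squares to `-id`, is orthogonal for the
standard neutral form, and if `j` is integrable on `g` then `J_j` is integrable
on the cotangent Lie algebra. -/
theorem Jcx_hermitian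
    (L : Type*) [LieRing L] [LieAlgebra ℝ L] [FiniteDimensional ℝ L]
    (j : L →ₗ[ℝ] L) (hj : ∀ x : L, j (j x) = -x) :
    (∀ u : L × Module.Dual ℝ L, Jcx j (Jcx j u) = -u) ∧
    (∀ u v : L × Module.Dual ℝ L, ctf (Jcx j u) (Jcx j v) = ctf u v) ∧
    ((∀ x y : L, ⁅x, y⁆ + j ⁅j x, y⁆ + j ⁅x, j y⁆ - ⁅j x, j y⁆ = 0) →
      ∀ u v : L × Module.Dual ℝ L, nij (Jcx j) u v = 0) :=
  Jcx_hermitian_general L j hj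
end

section
/- Let g₆ be the 6-dimensional real Lie algebra with basis X₁,…,X₆ and nonzero brackets [X₁,X₂] = -X₅, [X₁,X₅] = -X₆ - μX₅, [X₃,X₄] = -X₆, where μ ≠ 0. Then every closed 2-form ω on g₆ is degenerate; in particular g₆ admits no symplectic structure. -/
/-!
Closedness gives `ω([x, y], z) = 0` whenever `z` commutes with `x` and `y`. Since
`X₆ = -[X₃, X₄]`, this kills `ω(X₆, Xᵢ)` for every `i ≠ 3, 4` (`X₆` is central). For `i = 3, 4`
use `X₆ = -[X₁, X₅] - μX₅` and `X₅ = -[X₁, X₂]`: as `X₁, X₂, X₅` commute with `X₃, X₄`, first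
`ω(X₅, Xᵢ) = 0` and then `ω(X₆, Xᵢ) = 0`. So `X₆` lies in the kernel of every
closed 2-form. (`Xᵢ₊₁` is `b i`.)
-/

theorem apply_lie_eq_zero_of_closed {R L : Type*} [CommRing R] [LieRing L] [LieAlgebra R L]
    {ω : L →ₗ[R] L →ₗ[R] R}
    (hclosed : ∀ x y z : L, ω ⁅x, y⁆ z + ω ⁅y, z⁆ x + ω ⁅z, x⁆ y = 0)
    {x y z : L} (hyz : ⁅y, z⁆ = 0) (hzx : ⁅z, x⁆ = 0) : ω ⁅x, y⁆ z = 0 := by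
  simpa [hyz, hzx] using hclosed x y z

theorem g6_no_symplectic_structure_general
    (L : Type*) [LieRing L] [LieAlgebra ℝ L]
    (μ : ℝ) (b : Module.Basis (Fin 6) ℝ L)
    (h12 : ⁅b 0, b 1⁆ = -b 4)
    (h15 : ⁅b 0, b 4⁆ = -b 5 - μ • b 4)
    (h34 : ⁅b 2, b 3⁆ = -b 5)
    (hz : ∀ i j : Fin 6, i < j →
      (i, j) ≠ ((0 : Fin 6), (1 : Fin 6)) →
      (i, j) ≠ ((0 : Fin 6), (4 : Fin 6)) →
      (i, j) ≠ ((2 : Fin 6), (3 : Fin 6)) → ⁅b i, b j⁆ = 0)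
    (ω : L →ₗ[ℝ] L →ₗ[ℝ] ℝ)
    (hclosed : ∀ x y z : L, ω ⁅x, y⁆ z + ω ⁅y, z⁆ x + ω ⁅z, x⁆ y = 0) :
    ∃ x : L, x ≠ 0 ∧ ∀ y : L, ω x y = 0 := by
  have hcomm : ∀ i j : Fin 6,
      ({i, j} : Finset (Fin 6)) ∉ ({{0, 1}, {0, 4}, {2, 3}} : Finset (Finset (Fin 6))) →
      ⁅b i, b j⁆ = 0 := by
    intro i j h
    rcases lt_trichotomy i j with hij | rfl | hij
    · refine hz i j hij ?_ ?_ ?_ <;> rintro ⟨⟩ <;> exact h (by decide)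
    · exact lie_self _
    · rw [← lie_skew]
      refine neg_eq_zero.mpr (hz j i hij ?_ ?_ ?_) <;> rintro ⟨⟩ <;> exact h (by decide)
  have via_X34 : ∀ i, ⁅b 3, b i⁆ = 0 → ⁅b i, b 2⁆ = 0 → ω (b 5) (b i) = 0 :=
    fun i h3 h2 => by simpa [h34] using apply_lie_eq_zero_of_closed hclosed h3 h2
  have via_X15 : ∀ i, ⁅b 1, b i⁆ = 0 → ⁅b 4, b i⁆ = 0 → ⁅b i, b 0⁆ = 0 →
      ω (b 5) (b i) = 0 := by
    intro i h1 h4 h0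
    have hX5 : ω (b 4) (b i) = 0 := by
      simpa [h12] using apply_lie_eq_zero_of_closed hclosed h1 h0
    simpa [h15, hX5] using apply_lie_eq_zero_of_closed hclosed h4 h0
  have hb5 : ∀ i : Fin 6, ω (b 5) (b i) = 0 := by
    intro i
    fin_cases i <;> first
      | exact via_X34 _ (hcomm _ _ (by decide)) (hcomm _ _ (by decide))
      | exact via_X15 _ (hcomm _ _ (by decide)) (hcomm _ _ (by decide)) (hcomm _ _ (by decide))
  have hker : ω (b 5) = 0 := b.ext fun i => hb5 i
  exact ⟨b 5, b.ne_zero 5, fun y => by rw [hker, LinearMap.zero_apply]⟩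

/-- The 6-dimensional solvable Lie algebra `g₆` (basis `X₁,…,X₆` with
`[X₁,X₂]=-X₅`, `[X₁,X₅]=-X₆-μX₅`, `[X₃,X₄]=-X₆`, `μ ≠ 0`) admits no
symplectic structure: every closed 2-form on it is degenerate. -/
theorem g6_no_symplectic_structure
    (L : Type*) [LieRing L] [LieAlgebra ℝ L] [FiniteDimensional ℝ L]
    (μ : ℝ) (hμ : μ ≠ 0) (b : Module.Basis (Fin 6) ℝ L)
    (h12 : ⁅b 0, b 1⁆ = -b 4)
    (h15 : ⁅b 0, b 4⁆ = -b 5 - μ • b 4)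
    (h34 : ⁅b 2, b 3⁆ = -b 5)
    (hz : ∀ i j : Fin 6, i < j →
      (i, j) ≠ ((0 : Fin 6), (1 : Fin 6)) →
      (i, j) ≠ ((0 : Fin 6), (4 : Fin 6)) →
      (i, j) ≠ ((2 : Fin 6), (3 : Fin 6)) → ⁅b i, b j⁆ = 0)
    (ω : L →ₗ[ℝ] L →ₗ[ℝ] ℝ)
    (hskew : ∀ x y : L, ω x y = -(ω y x))
    (hclosed : ∀ x y z : L, ω ⁅x, y⁆ z + ω ⁅y, z⁆ x + ω ⁅z, x⁆ y = 0) :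
    ∃ x : L, x ≠ 0 ∧ ∀ y : L, ω x y = 0 :=
  g6_no_symplectic_structure_general L μ b h12 h15 h34 hz ω hclosed
end

section
/- Let g₆ be the 6-dimensional real Lie algebra with basis X₁,…,X₆ and nonzero brackets [X₁,X₂] = -X₅, [X₁,X₅] = -X₆ - μX₅, [X₃,X₄] = -X₆, where μ ≠ 0. Then g₆ admits no complex structure: there is no linear endomorphism J of g₆ with J² = -id and N_J ≡ 0. -/
/-!
Write `b 0, …, b 5` for `X₁, …, X₆`. If `z` is central, `N_J(z, ·) = 0` says that `ad (J z)` commutes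
with `J`, so its image is `J`-invariant, and `J`-invariant subspaces have even dimension because
`det (J)² = (-1)^dim`. Take `z = b 5`. The image of `ad (J (b 5))` lies in the plane `⟨b 4, b 5⟩`, so it
is either zero, and then `J (b 5)` is central, hence a multiple of `b 5`, or the whole plane, and then
`J (b 5) ∈ J ⟨b 4, b 5⟩ = ⟨b 4, b 5⟩`. Either way `J (b 5) ∈ ⟨b 4, b 5⟩`, and every element there has
`ad` of rank at most one, so in fact `ad (J (b 5)) = 0`. Then the line `ℝ b 5` is `J`-invariant, which
is impossible.
-/

open Module Submodule LieAlgebra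

section AlmostComplex

variable {K V : Type*} [Field K] [LinearOrder K] [IsStrictOrderedRing K]
  [AddCommGroup V] [Module K V] [FiniteDimensional K V] {J : V →ₗ[K] V}

theorem even_finrank_of_apply_apply_eq_neg (hJ : ∀ x, J (J x) = -x) : Even (finrank K V) := by
  have hdet : LinearMap.det J ^ 2 = (-1) ^ finrank K V := by
    have hJJ : J ∘ₗ J = (-1 : K) • LinearMap.id := LinearMap.ext fun x => by simp [hJ]
    rw [sq, ← LinearMap.det_comp, hJJ, LinearMap.det_smul, LinearMap.det_id, mul_one]
  by_contra hodd
  rw [Nat.not_even_iff_odd.mp hodd |>.neg_one_pow] at hdet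
  linarith [sq_nonneg (LinearMap.det J)]

theorem two_le_finrank_of_mem_invtSubmodule (hJ : ∀ x, J (J x) = -x) {W : Submodule K V}
    (hW : W ∈ Module.End.invtSubmodule J) (hne : W ≠ ⊥) : 2 ≤ finrank K W := by
  have heven : Even (finrank K W) :=
    even_finrank_of_apply_apply_eq_neg (J := J.restrict hW) fun x => Subtype.ext (hJ x)
  have hpos : finrank K W ≠ 0 := fun h => hne (Submodule.finrank_eq_zero.mp h)
  obtain ⟨k, hk⟩ := heven
  omega

theorem eq_bot_of_mem_invtSubmodule_of_le_span_singleton (hJ : ∀ x, J (J x) = -x)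
    {W : Submodule K V} (hW : W ∈ Module.End.invtSubmodule J) {v : V} (hle : W ≤ K ∙ v) :
    W = ⊥ := by
  by_contra hne
  have h₁ := two_le_finrank_of_mem_invtSubmodule hJ hW hne
  have h₂ := Submodule.finrank_mono hle
  have h₃ : finrank K (K ∙ v) ≤ 1 := (finrank_span_le_card ({v} : Set V)).trans (by simp)
  omega

theorem eq_span_pair_of_mem_invtSubmodule (hJ : ∀ x, J (J x) = -x)
    {W : Submodule K V} (hW : W ∈ Module.End.invtSubmodule J) (hne : W ≠ ⊥) {u v : V}
    (hle : W ≤ span K {u, v}) : W = span K {u, v} := by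
  refine Submodule.eq_of_le_of_finrank_le hle ?_
  have h₁ := two_le_finrank_of_mem_invtSubmodule hJ hW hne
  classical
  have h₂ := finrank_span_finset_le_card (R := K) ({u, v} : Finset V)
  rw [Set.finrank, Finset.coe_pair] at h₂
  have h₃ := Finset.card_le_two (a := u) (b := v)
  omega

end AlmostComplex

theorem Module.End.range_mem_invtSubmodule_of_commute {R M : Type*} [Semiring R]
    [AddCommMonoid M] [Module R M] {f g : Module.End R M} (h : Commute f g) :
    LinearMap.range f ∈ g.invtSubmodule := by
  rintro _ ⟨y, rfl⟩
  exact ⟨g y, congrArg (· y) h.eq⟩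

section Nijenhuis

variable {R L : Type*} [CommRing R] [LieRing L] [LieAlgebra R L]

def nijenhuis (J : L →ₗ[R] L) (x y : L) : L :=
  ⁅x, y⁆ + J ⁅J x, y⁆ + J ⁅x, J y⁆ - ⁅J x, J y⁆

theorem commute_ad_of_nijenhuis_eq_zero {J : L →ₗ[R] L} (hN : ∀ x y, nijenhuis J x y = 0)
    {z : L} (hz : ∀ y : L, ⁅z, y⁆ = 0) : Commute (ad R L (J z)) J := by
  refine LinearMap.ext fun y => ?_
  have h := hN z y
  rw [nijenhuis, hz, hz, map_zero, zero_add, add_zero, sub_eq_zero] at h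
  exact h.symm

end Nijenhuis

structure IsG6Basis {L : Type*} [LieRing L] [LieAlgebra ℝ L] (μ : ℝ) (b : Basis (Fin 6) ℝ L) :
    Prop where
  lie_zero_one : ⁅b 0, b 1⁆ = -b 4
  lie_zero_four : ⁅b 0, b 4⁆ = -b 5 - μ • b 4
  lie_two_three : ⁅b 2, b 3⁆ = -b 5
  lie_eq_zero : ∀ i j : Fin 6, i < j → (i, j) ≠ (0, 1) → (i, j) ≠ (0, 4) → (i, j) ≠ (2, 3) →
    ⁅b i, b j⁆ = 0

namespace IsG6Basis

variable {L : Type*} [LieRing L] [LieAlgebra ℝ L] {μ : ℝ} {b : Basis (Fin 6) ℝ L}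

theorem lie_eq (hb : IsG6Basis μ b) (x y : L) :
    ⁅x, y⁆ =
      (-(b.repr x 0 * b.repr y 1 - b.repr x 1 * b.repr y 0)
        - μ * (b.repr x 0 * b.repr y 4 - b.repr x 4 * b.repr y 0)) • b 4 +
      (-(b.repr x 0 * b.repr y 4 - b.repr x 4 * b.repr y 0)
        - (b.repr x 2 * b.repr y 3 - b.repr x 3 * b.repr y 2)) • b 5 := by
  have swap : ∀ i j : Fin 6, j < i → ⁅b i, b j⁆ = -⁅b j, b i⁆ := fun _ _ _ => (lie_skew _ _).symm
  conv_lhs => rw [← b.sum_repr x, ← b.sum_repr y]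
  simp (disch := decide) only [Fin.sum_univ_six, add_lie, lie_add, smul_lie, lie_smul, lie_self,
    swap, hb.lie_zero_one, hb.lie_zero_four, hb.lie_two_three, hb.lie_eq_zero]
  module

theorem lie_four (hb : IsG6Basis μ b) (y : L) : ⁅b 4, y⁆ = b.repr y 0 • (μ • b 4 + b 5) := by
  rw [hb.lie_eq]
  simp only [Basis.repr_self, Finsupp.single_apply, Fin.reduceEq, if_true, if_false]
  module

theorem lie_five (hb : IsG6Basis μ b) (y : L) : ⁅b 5, y⁆ = 0 := by
  simp [hb.lie_eq]

theorem range_ad_le (hb : IsG6Basis μ b) (x : L) :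
    LinearMap.range (ad ℝ L x) ≤ span ℝ {b 4, b 5} := by
  rintro _ ⟨y, rfl⟩
  rw [ad_apply, hb.lie_eq, mem_span_pair]
  exact ⟨_, _, rfl⟩

theorem range_ad_le_of_mem (hb : IsG6Basis μ b) {x : L} (hx : x ∈ span ℝ {b 4, b 5}) :
    LinearMap.range (ad ℝ L x) ≤ ℝ ∙ (μ • b 4 + b 5) := by
  obtain ⟨s, t, rfl⟩ := mem_span_pair.mp hx
  rintro _ ⟨y, rfl⟩
  refine mem_span_singleton.mpr ⟨s * b.repr y 0, ?_⟩
  rw [ad_apply, add_lie, smul_lie, smul_lie, hb.lie_four, hb.lie_five, smul_zero, add_zero,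
    smul_smul]

theorem mem_span_of_ad_eq_zero (hb : IsG6Basis μ b) {x : L} (hx : ad ℝ L x = 0) :
    x ∈ ℝ ∙ b 5 := by
  have coord : ∀ i k, b.repr ⁅x, b i⁆ k = 0 := fun i k => by
    rw [← ad_apply ℝ, hx, LinearMap.zero_apply, map_zero, Finsupp.zero_apply]
  have h0 : b.repr x 0 = 0 := by simpa [hb.lie_eq] using coord 1 4
  have h4 : b.repr x 4 = 0 := by simpa [hb.lie_eq] using coord 0 5
  have h1 : b.repr x 1 = 0 := by simpa [hb.lie_eq, h4] using coord 0 4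
  have h2 : b.repr x 2 = 0 := by simpa [hb.lie_eq] using coord 3 5
  have h3 : b.repr x 3 = 0 := by simpa [hb.lie_eq] using coord 2 5
  refine mem_span_singleton.mpr ⟨b.repr x 5, ?_⟩
  conv_rhs => rw [← b.sum_repr x, Fin.sum_univ_six, h0, h1, h2, h3, h4]
  simp only [zero_smul, zero_add]

end IsG6Basis

theorem g6_no_complex_structure_general
    (L : Type*) [LieRing L] [LieAlgebra ℝ L]
    (μ : ℝ) (b : Module.Basis (Fin 6) ℝ L)
    (h12 : ⁅b 0, b 1⁆ = -b 4)
    (h15 : ⁅b 0, b 4⁆ = -b 5 - μ • b 4)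
    (h34 : ⁅b 2, b 3⁆ = -b 5)
    (hz : ∀ i j : Fin 6, i < j →
      (i, j) ≠ ((0 : Fin 6), (1 : Fin 6)) →
      (i, j) ≠ ((0 : Fin 6), (4 : Fin 6)) →
      (i, j) ≠ ((2 : Fin 6), (3 : Fin 6)) → ⁅b i, b j⁆ = 0) :
    ¬ ∃ J : L →ₗ[ℝ] L, (∀ x : L, J (J x) = -x) ∧
      (∀ x y : L, ⁅x, y⁆ + J ⁅J x, y⁆ + J ⁅x, J y⁆ - ⁅J x, J y⁆ = 0) := by
  rintro ⟨J, hJ, hN⟩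
  have hb : IsG6Basis μ b := ⟨h12, h15, h34, hz⟩
  have : FiniteDimensional ℝ L := Module.Finite.of_basis b
  set R := LinearMap.range (ad ℝ L (J (b 5)))
  have hR : R ∈ Module.End.invtSubmodule J :=
    Module.End.range_mem_invtSubmodule_of_commute (commute_ad_of_nijenhuis_eq_zero hN hb.lie_five)
  have hmem : J (b 5) ∈ span ℝ {b 4, b 5} := by
    by_cases hR0 : R = ⊥
    · exact span_mono (by simp) (hb.mem_span_of_ad_eq_zero (LinearMap.range_eq_bot.mp hR0))
    · have hRW := eq_span_pair_of_mem_invtSubmodule hJ hR hR0 (hb.range_ad_le _)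
      have h5 : b 5 ∈ R := hRW ▸ subset_span (by simp)
      exact hRW ▸ hR h5
  have had : ad ℝ L (J (b 5)) = 0 := LinearMap.range_eq_bot.mp
    (eq_bot_of_mem_invtSubmodule_of_le_span_singleton hJ hR (hb.range_ad_le_of_mem hmem))
  have hline : ℝ ∙ b 5 ∈ Module.End.invtSubmodule J :=
    (span_singleton_le_iff_mem _ _).mpr (hb.mem_span_of_ad_eq_zero had)
  exact b.ne_zero 5 <| span_singleton_eq_bot.mp <|
    eq_bot_of_mem_invtSubmodule_of_le_span_singleton hJ hline le_rfl

/-- The 6-dimensional solvable Lie algebra `g₆` (basis `X₁,…,X₆` with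
`[X₁,X₂]=-X₅`, `[X₁,X₅]=-X₆-μX₅`, `[X₃,X₄]=-X₆`, `μ ≠ 0`) admits no
complex structure. -/
theorem g6_no_complex_structure
    (L : Type*) [LieRing L] [LieAlgebra ℝ L] [FiniteDimensional ℝ L]
    (μ : ℝ) (hμ : μ ≠ 0) (b : Module.Basis (Fin 6) ℝ L)
    (h12 : ⁅b 0, b 1⁆ = -b 4)
    (h15 : ⁅b 0, b 4⁆ = -b 5 - μ • b 4)
    (h34 : ⁅b 2, b 3⁆ = -b 5)
    (hz : ∀ i j : Fin 6, i < j →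
      (i, j) ≠ ((0 : Fin 6), (1 : Fin 6)) →
      (i, j) ≠ ((0 : Fin 6), (4 : Fin 6)) →
      (i, j) ≠ ((2 : Fin 6), (3 : Fin 6)) → ⁅b i, b j⁆ = 0) :
    ¬ ∃ J : L →ₗ[ℝ] L, (∀ x : L, J (J x) = -x) ∧
      (∀ x y : L, ⁅x, y⁆ + J ⁅J x, y⁆ + J ⁅x, J y⁆ - ⁅J x, J y⁆ = 0) :=
  g6_no_complex_structure_general L μ b h12 h15 h34 hz
end

section
/- Let g = ℝ × r₃ be the 4-dimensional solvable Lie algebra with basis e₀,e₁,e₂,e₃ and nonzero brackets [e₁,e₂] = e₂, [e₁,e₃] = e₂ + e₃. Then the cotangent Lie algebra T*g admits no hermitian structure with respect to the standard neutral bilinear form: there is no endomorphism J of g ⊕ g* with J² = -id, ⟨Ju,Jv⟩ = ⟨u,v⟩, and N_J ≡ 0. Equivalently, ℝ × r₃ admits no generalized complex structure. -/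
/-!
The centre of `T*g` is spanned by `e₀, e⁰, e¹`. For central `z` the condition `N_J(z, ·) = 0`
says that `ad (J z)` commutes with `J`, so `J` preserves the eigenspaces of `ad (J z)`; since
`J² = -1`, no line is `J`-invariant. If `J z` had an `e₁`-component `λ ≠ 0`, the
`λ`-eigenspace of `ad (J z)` would be such a line, so `e₁`-components of `J z` vanish. Applying
`J² = -1` to `ad (J e¹) e₁ = -ad e₁ (J e¹)` shows that `J e¹` is, modulo `e¹`, an eigenvector of
`ad e₁`, which acts on `span (e₂, e₃)` and `span (e², e³)` by Jordan blocks. This pins `J e¹`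
down to `span (e¹, e₂)` or `span (e¹, e³)`. In both cases the commutation relations force `J u`,
for the central `u = e₀ + e⁰`, into `span (e₀, e⁰)` plus an isotropic subspace orthogonal to it;
but `⟨u, u⟩ = 1` and `⟨u, J u⟩ = 0`, so `⟨J u, J u⟩ = 1` is impossible there.
-/

open LieAlgebra

lemma eq_zero_of_apply_eq_smul {V : Type*} [AddCommGroup V] [Module ℝ V] {J : V →ₗ[ℝ] V}
    (hJ : ∀ u, J (J u) = -u) {x : V} {c : ℝ} (hx : J x = c • x) : x = 0 := by
  have h : (c ^ 2 + 1) • x = 0 := by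
    have := hJ x
    rw [hx, map_smul, hx, smul_smul] at this
    rw [add_smul, one_smul, sq, this, neg_add_cancel]
  exact (smul_eq_zero.mp h).resolve_left (by positivity)

lemma jordan_eigen_cases {k n a₂ a₃ b₂ b₃ : ℝ} (hk : k ≠ 0)
    (ha₂ : k * (a₂ + a₃) = n * a₂) (ha₃ : k * a₃ = n * a₃)
    (hb₂ : k * b₂ = -n * b₂) (hb₃ : k * (b₂ + b₃) = -n * b₃) :
    a₃ = 0 ∧ b₂ = 0 ∧ (a₂ = 0 ∨ b₃ = 0) := by
  obtain rfl : a₃ = 0 := by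
    have : k * (a₃ * a₃) = 0 := by linear_combination a₃ * ha₂ - a₂ * ha₃
    simpa [hk] using this
  obtain rfl : b₂ = 0 := by
    have : k * (b₂ * b₂) = 0 := by linear_combination b₂ * hb₃ - b₃ * hb₂
    simpa [hk] using this
  have : k * (a₂ * b₃) = 0 := by linear_combination (b₃ * ha₂ + a₂ * hb₃) / 2
  simpa [hk] using this

section General

variable {L : Type*} [LieRing L] [LieAlgebra ℝ L]

lemma ctb_swap (u v : L × Module.Dual ℝ L) : ctb v u = -ctb u v := by
  refine Prod.ext (by simp [ctb]) ?_
  ext x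
  simp only [ctb, Prod.snd_neg, LinearMap.add_apply, LinearMap.neg_apply, LinearMap.comp_apply]
  ring

lemma ctf_comm (u v : L × Module.Dual ℝ L) : ctf u v = ctf v u := by
  simp only [ctf]; ring

lemma ctf_neg_right (u v : L × Module.Dual ℝ L) : ctf u (-v) = -ctf u v := by
  simp only [ctf, Prod.fst_neg, Prod.snd_neg, LinearMap.neg_apply, map_neg]; ring

structure IsGeneralizedComplexStructure
    (J : L × Module.Dual ℝ L →ₗ[ℝ] L × Module.Dual ℝ L) : Prop where
  apply_apply : ∀ u, J (J u) = -u
  ctf_apply_apply : ∀ u v, ctf (J u) (J v) = ctf u v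
  nij_eq_zero : ∀ u v, nij (J ·) u v = 0

namespace IsGeneralizedComplexStructure

variable {J : L × Module.Dual ℝ L →ₗ[ℝ] L × Module.Dual ℝ L}
  (hJ : IsGeneralizedComplexStructure J)
include hJ

lemma ctf_apply_right (u v : L × Module.Dual ℝ L) : ctf u (J v) = -ctf (J u) v := by
  rw [← hJ.ctf_apply_apply, hJ.apply_apply, ctf_neg_right]

lemma ctf_apply_self (u : L × Module.Dual ℝ L) : ctf u (J u) = 0 := by
  have := hJ.ctf_apply_right u u
  rw [ctf_comm (J u)] at this
  linarith

lemma apply_ctb_apply_left {z : L × Module.Dual ℝ L} (hz : ∀ v, ctb z v = 0)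
    (v : L × Module.Dual ℝ L) : J (ctb (J z) v) = ctb (J z) (J v) := by
  have h := hJ.nij_eq_zero z v
  simp only [nij, hz, map_zero, zero_add, add_zero] at h
  exact sub_eq_zero.mp h

end IsGeneralizedComplexStructure

end General

section Coordinates

variable {L : Type*} [AddCommGroup L] [Module ℝ L] {ι : Type*} (b : Module.Basis ι ℝ L)

/-- `ctE b i = eᵢ` and `ctF b i = eⁱ` form the basis of `g ⊕ g*` induced by `b`;
`coordE b i` and `coordF b i` are the dual coordinate functionals. -/
noncomputable def ctE (i : ι) : L × Module.Dual ℝ L := (b i, 0)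

noncomputable def ctF (i : ι) : L × Module.Dual ℝ L := (0, b.coord i)

noncomputable def coordE (i : ι) : L × Module.Dual ℝ L →ₗ[ℝ] ℝ :=
  b.coord i ∘ₗ LinearMap.fst ℝ L (Module.Dual ℝ L)

noncomputable def coordF (i : ι) : L × Module.Dual ℝ L →ₗ[ℝ] ℝ :=
  Module.Dual.eval ℝ L (b i) ∘ₗ LinearMap.snd ℝ L (Module.Dual ℝ L)

lemma coordE_apply (i : ι) (u : L × Module.Dual ℝ L) : coordE b i u = b.repr u.1 i := rfl

lemma coordF_apply (i : ι) (u : L × Module.Dual ℝ L) : coordF b i u = u.2 (b i) := rfl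

@[simp] lemma coordE_ctE [DecidableEq ι] (i j : ι) :
    coordE b i (ctE b j) = if j = i then 1 else 0 := by
  simp [coordE_apply, ctE, Finsupp.single_apply]

@[simp] lemma coordE_ctF (i j : ι) : coordE b i (ctF b j) = 0 := by
  simp [coordE_apply, ctF]

@[simp] lemma coordF_ctE (i j : ι) : coordF b i (ctE b j) = 0 := by
  simp [coordF_apply, ctE]

@[simp] lemma coordF_ctF [DecidableEq ι] (i j : ι) :
    coordF b i (ctF b j) = if i = j then 1 else 0 := by
  simp [coordF_apply, ctF, Finsupp.single_apply]

lemma ext_coord {u v : L × Module.Dual ℝ L} (h : ∀ i, coordE b i u = coordE b i v)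
    (h' : ∀ i, coordF b i u = coordF b i v) : u = v :=
  Prod.ext (b.ext_elem h) (b.ext h')

end Coordinates

lemma ext_coord_four {L : Type*} [AddCommGroup L] [Module ℝ L] (b : Module.Basis (Fin 4) ℝ L)
    {u v : L × Module.Dual ℝ L}
    (h0 : coordE b 0 u = coordE b 0 v) (h1 : coordE b 1 u = coordE b 1 v)
    (h2 : coordE b 2 u = coordE b 2 v) (h3 : coordE b 3 u = coordE b 3 v)
    (h0' : coordF b 0 u = coordF b 0 v) (h1' : coordF b 1 u = coordF b 1 v)
    (h2' : coordF b 2 u = coordF b 2 v) (h3' : coordF b 3 u = coordF b 3 v) : u = v :=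
  ext_coord b (fun i => by fin_cases i <;> assumption) (fun i => by fin_cases i <;> assumption)

section FormInCoordinates

variable {L : Type*} [LieRing L] [LieAlgebra ℝ L] {ι : Type*} (b : Module.Basis ι ℝ L)

lemma ctf_ctE (i : ι) (u : L × Module.Dual ℝ L) : ctf (ctE b i) u = coordF b i u / 2 := by
  simp [ctf, ctE, coordF_apply]

lemma ctf_ctF (i : ι) (u : L × Module.Dual ℝ L) : ctf (ctF b i) u = coordE b i u / 2 := by
  simp [ctf, ctF, coordE_apply]

lemma ctf_eq_sum [Fintype ι] (u v : L × Module.Dual ℝ L) :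
    ctf u v = (∑ i, (coordE b i u * coordF b i v + coordE b i v * coordF b i u)) / 2 := by
  have h (φ : Module.Dual ℝ L) (x : L) : φ x = ∑ i, b.repr x i * φ (b i) := by
    conv_lhs => rw [← b.sum_repr x]
    simp only [map_sum, map_smul, smul_eq_mul]
  rw [ctf, h v.2 u.1, h u.2 v.1, ← Finset.sum_add_distrib]
  rfl

namespace IsGeneralizedComplexStructure

variable {b} {J : L × Module.Dual ℝ L →ₗ[ℝ] L × Module.Dual ℝ L}
  (hJ : IsGeneralizedComplexStructure J)
include hJ

lemma coordE_apply_ctF (i j : ι) : coordE b i (J (ctF b j)) = -coordE b j (J (ctF b i)) := by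
  have := hJ.ctf_apply_right (ctF b i) (ctF b j)
  rw [ctf_ctF, ctf_comm, ctf_ctF] at this
  linarith

lemma coordF_apply_ctF (i j : ι) : coordF b i (J (ctF b j)) = -coordE b j (J (ctE b i)) := by
  have := hJ.ctf_apply_right (ctE b i) (ctF b j)
  rw [ctf_ctE, ctf_comm, ctf_ctF] at this
  linarith

end IsGeneralizedComplexStructure

end FormInCoordinates

structure IsRTimesR3Basis {L : Type*} [LieRing L] [LieAlgebra ℝ L]
    (b : Module.Basis (Fin 4) ℝ L) : Prop where
  lie_one_two : ⁅b 1, b 2⁆ = b 2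
  lie_one_three : ⁅b 1, b 3⁆ = b 2 + b 3
  lie_eq_zero :
    ∀ i j : Fin 4, i < j → (i, j) ≠ (1, 2) → (i, j) ≠ (1, 3) → ⁅b i, b j⁆ = 0

namespace IsRTimesR3Basis

variable {L : Type*} [LieRing L] [LieAlgebra ℝ L] {b : Module.Basis (Fin 4) ℝ L}
  (hb : IsRTimesR3Basis b)
include hb

lemma lie_eq (x y : L) :
    ⁅x, y⁆ = (b.repr x 1 * b.repr y 2 - b.repr x 2 * b.repr y 1
        + b.repr x 1 * b.repr y 3 - b.repr x 3 * b.repr y 1) • b 2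
      + (b.repr x 1 * b.repr y 3 - b.repr x 3 * b.repr y 1) • b 3 := by
  have h01 := hb.lie_eq_zero 0 1 (by decide) (by decide) (by decide)
  have h02 := hb.lie_eq_zero 0 2 (by decide) (by decide) (by decide)
  have h03 := hb.lie_eq_zero 0 3 (by decide) (by decide) (by decide)
  have h23 := hb.lie_eq_zero 2 3 (by decide) (by decide) (by decide)
  have swap {i j : Fin 4} {z : L} (h : ⁅b i, b j⁆ = z) : ⁅b j, b i⁆ = -z := by
    rw [← lie_skew, h]
  conv_lhs => rw [← b.sum_repr x, ← b.sum_repr y]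
  simp only [Fin.sum_univ_four, add_lie, lie_add, smul_lie, lie_smul, lie_self, h01, h02, h03,
    h23, swap h01, swap h02, swap h03, swap h23, hb.lie_one_two, hb.lie_one_three,
    swap hb.lie_one_two, swap hb.lie_one_three, neg_zero, smul_zero, smul_neg, smul_add,
    zero_add, add_zero]
  module

lemma ctb_eq (u v : L × Module.Dual ℝ L) :
    ctb u v =
      (coordE b 1 u * coordE b 2 v - coordE b 2 u * coordE b 1 v
          + coordE b 1 u * coordE b 3 v - coordE b 3 u * coordE b 1 v) • ctE b 2
      + (coordE b 1 u * coordE b 3 v - coordE b 3 u * coordE b 1 v) • ctE b 3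
      + ((coordE b 2 u + coordE b 3 u) * coordF b 2 v + coordE b 3 u * coordF b 3 v
          - (coordE b 2 v + coordE b 3 v) * coordF b 2 u - coordE b 3 v * coordF b 3 u) • ctF b 1
      + (-(coordE b 1 u * coordF b 2 v) + coordE b 1 v * coordF b 2 u) • ctF b 2
      + (-(coordE b 1 u * (coordF b 2 v + coordF b 3 v))
          + coordE b 1 v * (coordF b 2 u + coordF b 3 u)) • ctF b 3 := by
  refine ext_coord b (fun i => ?_) (fun i => ?_)
  · simp only [map_add, map_smul, coordE_ctE, coordE_ctF]
    rw [coordE_apply, ctb, hb.lie_eq]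
    fin_cases i <;> simp [coordE_apply]
  · simp only [map_add, map_smul, coordF_ctE, coordF_ctF]
    simp only [coordF_apply, coordE_apply, ctb, LinearMap.add_apply,
      LinearMap.neg_apply, LinearMap.comp_apply, ad_apply]
    rw [hb.lie_eq u.1, hb.lie_eq v.1]
    fin_cases i <;> simp <;> ring

lemma ctb_eq_zero_of_coord_eq_zero {z : L × Module.Dual ℝ L} (h1 : coordE b 1 z = 0)
    (h2 : coordE b 2 z = 0) (h3 : coordE b 3 z = 0) (h2' : coordF b 2 z = 0)
    (h3' : coordF b 3 z = 0) (v : L × Module.Dual ℝ L) : ctb z v = 0 := by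
  simp [hb.ctb_eq, h1, h2, h3, h2', h3']

lemma ctb_eigenvector {y : L × Module.Dual ℝ L} (hy : coordE b 1 y ≠ 0) :
    ctb y (ctE b 2 - (coordF b 2 y / coordE b 1 y) • ctF b 1) =
      coordE b 1 y • (ctE b 2 - (coordF b 2 y / coordE b 1 y) • ctF b 1) := by
  rw [hb.ctb_eq]
  refine ext_coord_four b ?_ ?_ ?_ ?_ ?_ ?_ ?_ ?_ <;> simp
  field_simp

lemma eq_smul_of_ctb_eq_smul {y v : L × Module.Dual ℝ L} (hy : coordE b 1 y ≠ 0)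
    (hv : ctb y v = coordE b 1 y • v) :
    v = coordE b 2 v • (ctE b 2 - (coordF b 2 y / coordE b 1 y) • ctF b 1) := by
  rw [hb.ctb_eq] at hv
  have e0 := congrArg (coordE b 0) hv
  have e1 := congrArg (coordE b 1) hv
  have e2 := congrArg (coordE b 2) hv
  have e0' := congrArg (coordF b 0) hv
  have e1' := congrArg (coordF b 1) hv
  have e2' := congrArg (coordF b 2) hv
  have e3' := congrArg (coordF b 3) hv
  simp [hy] at e0 e1 e0'
  simp [hy, e1] at e2
  simp [e1] at e1' e2' e3'
  have h2' : coordF b 2 v = 0 := (mul_eq_zero_iff_left hy).mp (by linarith)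
  have h3' : coordF b 3 v = 0 := by
    simp [h2'] at e3'
    exact (mul_eq_zero_iff_left hy).mp (by linarith)
  refine ext_coord_four b ?_ ?_ ?_ ?_ ?_ ?_ ?_ ?_ <;> simp [e0, e1, e2, e0', h2', h3']
  field_simp
  simp [h2', e2, h3'] at e1'
  linarith

lemma ctb_ctE_zero (v : L × Module.Dual ℝ L) : ctb (ctE b 0) v = 0 :=
  hb.ctb_eq_zero_of_coord_eq_zero (by simp) (by simp) (by simp) (by simp) (by simp) v

lemma ctb_ctF_zero (v : L × Module.Dual ℝ L) : ctb (ctF b 0) v = 0 :=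
  hb.ctb_eq_zero_of_coord_eq_zero (by simp) (by simp) (by simp) (by simp) (by simp) v

lemma ctb_ctF_one (v : L × Module.Dual ℝ L) : ctb (ctF b 1) v = 0 :=
  hb.ctb_eq_zero_of_coord_eq_zero (by simp) (by simp) (by simp) (by simp) (by simp) v

lemma ctb_eq_smul_add_of_coordE_one_eq_zero {w : L × Module.Dual ℝ L} (hw : coordE b 1 w = 0)
    (u : L × Module.Dual ℝ L) :
    ctb w u = coordE b 1 u • ctb w (ctE b 1) + coordF b 1 (ctb w u) • ctF b 1 := by
  rw [hb.ctb_eq w u, hb.ctb_eq w (ctE b 1)]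
  refine ext_coord_four b ?_ ?_ ?_ ?_ ?_ ?_ ?_ ?_ <;> simp [hw] <;> ring

lemma ctb_ctE_two_of_coordE_one_eq_zero {y : L × Module.Dual ℝ L} (hy : coordE b 1 y = 0) :
    ctb y (ctE b 2) = -coordF b 2 y • ctF b 1 := by
  rw [hb.ctb_eq]
  refine ext_coord_four b ?_ ?_ ?_ ?_ ?_ ?_ ?_ ?_ <;> simp [hy]

lemma ctb_ctF_two_of_coordE_one_eq_zero {y : L × Module.Dual ℝ L} (hy : coordE b 1 y = 0) :
    ctb y (ctF b 2) = (coordE b 2 y + coordE b 3 y) • ctF b 1 := by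
  rw [hb.ctb_eq]
  refine ext_coord_four b ?_ ?_ ?_ ?_ ?_ ?_ ?_ ?_ <;> simp [hy]

end IsRTimesR3Basis

namespace IsGeneralizedComplexStructure

variable {L : Type*} [LieRing L] [LieAlgebra ℝ L] {b : Module.Basis (Fin 4) ℝ L}
  {J : L × Module.Dual ℝ L →ₗ[ℝ] L × Module.Dual ℝ L}
  (hJ : IsGeneralizedComplexStructure J) (hb : IsRTimesR3Basis b)
include hJ

lemma one_le_sum_coordE_mul_coordF_apply :
    1 ≤ coordE b 1 (J (ctE b 0 + ctF b 0)) * coordF b 1 (J (ctE b 0 + ctF b 0))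
      + coordE b 2 (J (ctE b 0 + ctF b 0)) * coordF b 2 (J (ctE b 0 + ctF b 0))
      + coordE b 3 (J (ctE b 0 + ctF b 0)) * coordF b 3 (J (ctE b 0 + ctF b 0)) := by
  have h1 := hJ.ctf_apply_self (ctE b 0 + ctF b 0)
  have h2 := hJ.ctf_apply_apply (ctE b 0 + ctF b 0) (ctE b 0 + ctF b 0)
  generalize J (ctE b 0 + ctF b 0) = y at h1 h2 ⊢
  simp only [ctf_eq_sum b, Fin.sum_univ_four] at h1 h2
  simp at h1 h2
  rw [show coordF b 0 y = -coordE b 0 y by linarith] at h2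
  nlinarith [sq_nonneg (coordE b 0 y)]

include hb

lemma coordE_one_apply_eq_zero {z : L × Module.Dual ℝ L} (hz : ∀ v, ctb z v = 0) :
    coordE b 1 (J z) = 0 := by
  by_contra hy
  set x := ctE b 2 - (coordF b 2 (J z) / coordE b 1 (J z)) • ctF b 1
  have hJx : ctb (J z) (J x) = coordE b 1 (J z) • J x := by
    rw [← hJ.apply_ctb_apply_left hz, hb.ctb_eigenvector hy, map_smul]
  have hx : x = 0 := eq_zero_of_apply_eq_smul hJ.apply_apply (hb.eq_smul_of_ctb_eq_smul hy hJx)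
  simpa [x] using congrArg (coordE b 2) hx

lemma coords_apply_ctF_one :
    coordE b 3 (J (ctF b 1)) = 0 ∧ coordF b 2 (J (ctF b 1)) = 0 ∧
      (coordE b 2 (J (ctF b 1)) = 0 ∨ coordF b 3 (J (ctF b 1)) = 0) := by
  set w := J (ctF b 1)
  have hw : coordE b 1 w = 0 := hJ.coordE_one_apply_eq_zero hb hb.ctb_ctF_one
  set v := ctb w (ctE b 1)
  set m := coordE b 1 (J (ctE b 1))
  set n := coordF b 1 (ctb w (J (ctE b 1)))
  have hJv : J v = m • v + n • ctF b 1 := by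
    rw [hJ.apply_ctb_apply_left hb.ctb_ctF_one]
    exact hb.ctb_eq_smul_add_of_coordE_one_eq_zero hw _
  have hJJv : (1 + m ^ 2) • v + n • (m • ctF b 1 + w) = 0 := by
    have h := hJ.apply_apply v
    rw [hJv, map_add, map_smul, map_smul, hJv] at h
    linear_combination (norm := module) h
  have hcoord (φ : L × Module.Dual ℝ L →ₗ[ℝ] ℝ) (hφ : φ (ctF b 1) = 0) :
      (1 + m ^ 2) * φ v + n * φ w = 0 := by
    simpa [hφ] using congrArg φ hJJv
  have e2 := hcoord (coordE b 2) (by simp)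
  have e3 := hcoord (coordE b 3) (by simp)
  have e2' := hcoord (coordF b 2) (by simp)
  have e3' := hcoord (coordF b 3) (by simp)
  simp [v, hb.ctb_eq, hw] at e2 e3 e2' e3'
  refine jordan_eigen_cases (k := 1 + m ^ 2) (n := n) (by positivity) ?_ ?_ ?_ ?_
  · linear_combination -e2
  · linear_combination -e3
  · linear_combination e2'
  · linear_combination e3'

lemma coordE_zero_apply_ctF_one : coordE b 0 (J (ctF b 1)) = 0 := by
  rw [hJ.coordE_apply_ctF, hJ.coordE_one_apply_eq_zero hb hb.ctb_ctF_zero, neg_zero]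

lemma coordF_zero_apply_ctF_one : coordF b 0 (J (ctF b 1)) = 0 := by
  rw [hJ.coordF_apply_ctF, hJ.coordE_one_apply_eq_zero hb hb.ctb_ctE_zero, neg_zero]

lemma coordE_two_ne_zero_or_coordF_three_ne_zero :
    coordE b 2 (J (ctF b 1)) ≠ 0 ∨ coordF b 3 (J (ctF b 1)) ≠ 0 := by
  by_contra! h
  obtain ⟨hA3, hB2, -⟩ := hJ.coords_apply_ctF_one hb
  have hw : J (ctF b 1) = coordF b 1 (J (ctF b 1)) • ctF b 1 := by
    refine ext_coord_four b ?_ ?_ ?_ ?_ ?_ ?_ ?_ ?_ <;>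
      simp [h.1, h.2, hA3, hB2, hJ.coordE_zero_apply_ctF_one hb, hJ.coordF_zero_apply_ctF_one hb,
        hJ.coordE_one_apply_eq_zero hb hb.ctb_ctF_one]
  simpa using congrArg (coordF b 1) (eq_zero_of_apply_eq_smul hJ.apply_apply hw)

lemma coords_apply_of_coordF_three_eq_zero (hB3 : coordF b 3 (J (ctF b 1)) = 0)
    {z : L × Module.Dual ℝ L} (hz : ∀ v, ctb z v = 0) :
    coordE b 3 (J z) = 0 ∧ coordF b 2 (J z) = 0 ∧ coordF b 3 (J z) = 0 := by
  obtain ⟨hA3, hB2, -⟩ := hJ.coords_apply_ctF_one hb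
  have hA2 := (hJ.coordE_two_ne_zero_or_coordF_three_ne_zero hb).resolve_right (not_not_intro hB3)
  have hw := hJ.coordE_one_apply_eq_zero hb hb.ctb_ctF_one
  have hy := hJ.coordE_one_apply_eq_zero hb hz
  have he2 : coordE b 1 (J (ctE b 2)) = 0 := by
    have h := hJ.apply_ctb_apply_left hb.ctb_ctF_one (ctE b 2)
    rw [hb.ctb_ctE_two_of_coordE_one_eq_zero hw, hB2, neg_zero, zero_smul, map_zero] at h
    simpa [hb.ctb_eq, hw, hA3, hA2] using congrArg (coordE b 2) h
  have hf2 : coordE b 1 (J (ctF b 2)) = -coordE b 2 (J (ctF b 1)) := by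
    have h := hJ.apply_ctb_apply_left hb.ctb_ctF_one (ctF b 2)
    rw [hb.ctb_ctF_two_of_coordE_one_eq_zero hw, hA3, add_zero, map_smul] at h
    have h2 := congrArg (coordE b 2) h
    simp [hb.ctb_eq, hw, hA3] at h2
    have h2' : coordE b 2 (J (ctF b 1)) *
        (coordE b 1 (J (ctF b 2)) + coordE b 2 (J (ctF b 1))) = 0 := by
      linear_combination h2
    linarith [(mul_eq_zero_iff_left hA2).mp h2']
  have hz2 := hJ.apply_ctb_apply_left hz (ctE b 2)
  rw [hb.ctb_ctE_two_of_coordE_one_eq_zero hy, map_smul] at hz2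
  have hz3 := hJ.apply_ctb_apply_left hz (ctF b 2)
  rw [hb.ctb_ctF_two_of_coordE_one_eq_zero hy, map_smul] at hz3
  have e2 := congrArg (coordE b 2) hz2
  have e3 := congrArg (coordE b 3) hz3
  have e3' := congrArg (coordF b 3) hz3
  simp [hb.ctb_eq, hy, he2, hf2, hA2, hA3, hB3] at e2 e3 e3'
  exact ⟨e3, e2, by linarith⟩

lemma coords_apply_of_coordE_two_eq_zero (hA2 : coordE b 2 (J (ctF b 1)) = 0)
    {z : L × Module.Dual ℝ L} (hz : ∀ v, ctb z v = 0) :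
    coordE b 2 (J z) = 0 ∧ coordE b 3 (J z) = 0 ∧ coordF b 2 (J z) = 0 := by
  obtain ⟨hA3, hB2, -⟩ := hJ.coords_apply_ctF_one hb
  have hB3 := (hJ.coordE_two_ne_zero_or_coordF_three_ne_zero hb).resolve_left (not_not_intro hA2)
  have hw := hJ.coordE_one_apply_eq_zero hb hb.ctb_ctF_one
  have hy := hJ.coordE_one_apply_eq_zero hb hz
  have he2 : coordE b 1 (J (ctE b 2)) = 0 := by
    have h := hJ.apply_ctb_apply_left hb.ctb_ctF_one (ctE b 2)
    rw [hb.ctb_ctE_two_of_coordE_one_eq_zero hw, hB2, neg_zero, zero_smul, map_zero] at h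
    simpa [hb.ctb_eq, hw, hB2, hB3] using congrArg (coordF b 3) h
  have hf2 : coordE b 1 (J (ctF b 2)) = 0 := by
    have h := hJ.apply_ctb_apply_left hb.ctb_ctF_one (ctF b 2)
    rw [hb.ctb_ctF_two_of_coordE_one_eq_zero hw, hA2, hA3, add_zero, zero_smul, map_zero] at h
    simpa [hb.ctb_eq, hw, hB2, hB3] using congrArg (coordF b 3) h
  have hwz : ctb (J (ctF b 1)) (J z) = 0 := by
    rw [← hJ.apply_ctb_apply_left hb.ctb_ctF_one, ctb_swap, hz, neg_zero, map_zero]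
  have hz2 := hJ.apply_ctb_apply_left hz (ctE b 2)
  rw [hb.ctb_ctE_two_of_coordE_one_eq_zero hy, map_smul] at hz2
  have hz3 := hJ.apply_ctb_apply_left hz (ctF b 2)
  rw [hb.ctb_ctF_two_of_coordE_one_eq_zero hy, map_smul] at hz3
  have e1 := congrArg (coordF b 1) hwz
  have e2 := congrArg (coordF b 3) hz2
  have e3 := congrArg (coordF b 3) hz3
  simp [hb.ctb_eq, hy, hw, he2, hf2, hA2, hA3, hB2, hB3] at e1 e2 e3
  exact ⟨by linarith, e1, e2⟩

end IsGeneralizedComplexStructure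

theorem R_times_r3_no_generalized_complex_structure_general
    (L : Type*) [LieRing L] [LieAlgebra ℝ L]
    (b : Module.Basis (Fin 4) ℝ L)
    (h12 : ⁅b 1, b 2⁆ = b 2) (h13 : ⁅b 1, b 3⁆ = b 2 + b 3)
    (hz : ∀ i j : Fin 4, i < j →
      (i, j) ≠ ((1 : Fin 4), (2 : Fin 4)) →
      (i, j) ≠ ((1 : Fin 4), (3 : Fin 4)) → ⁅b i, b j⁆ = 0) :
    ¬ ∃ J : L × Module.Dual ℝ L →ₗ[ℝ] L × Module.Dual ℝ L,
      (∀ u, J (J u) = -u) ∧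
      (∀ u v, ctf (J u) (J v) = ctf u v) ∧
      (∀ u v, nij (J ·) u v = 0) := by
  rintro ⟨J, hJ2, hH, hN⟩
  have hJ : IsGeneralizedComplexStructure J := ⟨hJ2, hH, hN⟩
  have hb : IsRTimesR3Basis b := ⟨h12, h13, hz⟩
  have hu : ∀ v, ctb (ctE b 0 + ctF b 0) v = 0 :=
    hb.ctb_eq_zero_of_coord_eq_zero (by simp) (by simp) (by simp) (by simp) (by simp)
  have h1 := hJ.coordE_one_apply_eq_zero hb hu
  have hpos := hJ.one_le_sum_coordE_mul_coordF_apply (b := b)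
  obtain ⟨-, -, hA2 | hB3⟩ := hJ.coords_apply_ctF_one hb
  · obtain ⟨h2, h3, h2'⟩ := hJ.coords_apply_of_coordE_two_eq_zero hb hA2 hu
    rw [h1, h2, h3, h2'] at hpos
    norm_num at hpos
  · obtain ⟨h3, h2', h3'⟩ := hJ.coords_apply_of_coordF_three_eq_zero hb hB3 hu
    rw [h1, h3, h2', h3'] at hpos
    norm_num at hpos

/-- The Lie algebra `ℝ × r₃` (`[e₁,e₂]=e₂`, `[e₁,e₃]=e₂+e₃`) admits no
generalized complex structure: its cotangent Lie algebra carries no hermitian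
structure with respect to the standard neutral form. -/
theorem R_times_r3_no_generalized_complex_structure
    (L : Type*) [LieRing L] [LieAlgebra ℝ L] [FiniteDimensional ℝ L]
    (b : Module.Basis (Fin 4) ℝ L)
    (h12 : ⁅b 1, b 2⁆ = b 2) (h13 : ⁅b 1, b 3⁆ = b 2 + b 3)
    (hz : ∀ i j : Fin 4, i < j →
      (i, j) ≠ ((1 : Fin 4), (2 : Fin 4)) →
      (i, j) ≠ ((1 : Fin 4), (3 : Fin 4)) → ⁅b i, b j⁆ = 0) :
    ¬ ∃ J : L × Module.Dual ℝ L →ₗ[ℝ] L × Module.Dual ℝ L,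
      (∀ u, J (J u) = -u) ∧
      (∀ u v, ctf (J u) (J v) = ctf u v) ∧
      (∀ u v, nij (J ·) u v = 0) :=
  R_times_r3_no_generalized_complex_structure_general L b h12 h13 hz
end

section
/- Let g = r₄ be the 4-dimensional solvable Lie algebra with nonzero brackets [e₀,e₁] = e₁, [e₀,e₂] = e₁ + e₂, [e₀,e₃] = e₂ + e₃. Then r₄ admits no generalized complex structure, i.e. there is no endomorphism J of g ⊕ g* with J² = -id, orthogonal for the standard neutral form, and with vanishing Nijenhuis tensor for the cotangent Lie bracket. -/
open LieAlgebra

/-!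
Write `J (x, α) = (A x + P α, S x + D α)` in the basis `(eᵢ, ξⁱ)` of `g ⊕ g*`. Orthogonality and
`J² = -1` make `J` skew for the neutral form, so `P` and `S` are skew and `D = -Aᵀ`. Twenty
coordinates of `N_J = 0` and `J² = -1` then force `P₀₃ = P₀₂ = A₀₁ = A₀₂ = 0` and, according as
`P₀₁` vanishes or not, a chain of further entries, until a diagonal coordinate of `J² = -1` reads
`1 + a² = 0`.
-/

open Module

section Blocks

variable {L : Type*} [LieRing L] [LieAlgebra ℝ L] {ι : Type*} (b : Basis ι ℝ L)
  (J : L × Dual ℝ L →ₗ[ℝ] L × Dual ℝ L)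

theorem ctf_map_left_eq_neg (hJJ : ∀ u, J (J u) = -u)
    (horth : ∀ u v, ctf (J u) (J v) = ctf u v) (u v : L × Dual ℝ L) :
    ctf (J u) v = -ctf u (J v) := by
  rw [← horth u (J v), hJJ v]
  simp only [ctf, Prod.fst_neg, Prod.snd_neg, map_neg, LinearMap.neg_apply]
  ring

/-- With `J (x, α) = (A x + P α, S x + D α)`, `blockA b J` is the matrix of `A` in the basis `b`,
and `blockP`, `blockS`, `blockD` those of `P`, `S`, `D` in `b` and its dual basis. -/
noncomputable def blockA (i j : ι) : ℝ := b.repr (J (b j, 0)).1 i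

noncomputable def blockS (i j : ι) : ℝ := (J (b j, 0)).2 (b i)

variable [Fintype ι] [DecidableEq ι]

noncomputable def blockP (i j : ι) : ℝ := b.repr (J (0, b.dualBasis j)).1 i

noncomputable def blockD (i j : ι) : ℝ := (J (0, b.dualBasis j)).2 (b i)

theorem map_eq_sum_blocks (w : L × Dual ℝ L) :
    J w = ∑ j, b.repr w.1 j • J (b j, 0) + ∑ j, w.2 (b j) • J (0, b.dualBasis j) := by
  have hw : w = ∑ j, b.repr w.1 j • (b j, 0) + ∑ j, w.2 (b j) • (0, b.dualBasis j) := by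
    refine Prod.ext ?_ ?_
    · simp [Prod.fst_sum, b.sum_repr]
    · simp [Prod.snd_sum, Basis.coe_dualBasis, b.sum_dual_apply_smul_coord]
  conv_lhs => rw [hw]
  simp only [map_add, map_sum, map_smul]

theorem repr_fst_map (w : L × Dual ℝ L) (k : ι) :
    b.repr (J w).1 k = ∑ j, b.repr w.1 j * blockA b J k j + ∑ j, w.2 (b j) * blockP b J k j := by
  rw [map_eq_sum_blocks b J w]
  simp [blockA, blockP, Prod.fst_sum]

theorem snd_map_apply (w : L × Dual ℝ L) (k : ι) :
    (J w).2 (b k) = ∑ j, b.repr w.1 j * blockS b J k j + ∑ j, w.2 (b j) * blockD b J k j := by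
  rw [map_eq_sum_blocks b J w]
  simp [blockS, blockD, Prod.snd_sum]

variable {J}

theorem blockP_antisymm (hskew : ∀ u v, ctf (J u) v = -ctf u (J v)) (i j : ι) :
    blockP b J i j = -blockP b J j i := by
  have h := hskew (0, b.dualBasis j) (0, b.dualBasis i)
  simp only [ctf, blockP, Basis.dualBasis_apply, map_zero] at h ⊢
  linarith

omit [Fintype ι] [DecidableEq ι] in
theorem blockS_antisymm (hskew : ∀ u v, ctf (J u) v = -ctf u (J v)) (i j : ι) :
    blockS b J i j = -blockS b J j i := by
  have h := hskew (b j, 0) (b i, 0)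
  simp only [ctf, blockS, LinearMap.zero_apply] at h ⊢
  linarith

theorem blockD_eq_neg_blockA (hskew : ∀ u v, ctf (J u) v = -ctf u (J v)) (i j : ι) :
    blockD b J i j = -blockA b J j i := by
  have h := hskew (0, b.dualBasis j) (b i, 0)
  simp only [ctf, blockD, blockA, Basis.dualBasis_apply, map_zero, LinearMap.zero_apply] at h ⊢
  linarith

theorem blockP_self (hskew : ∀ u v, ctf (J u) v = -ctf u (J v)) (i : ι) :
    blockP b J i i = 0 := by
  linarith [blockP_antisymm b hskew i i]

omit [Fintype ι] [DecidableEq ι] in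
theorem blockS_self (hskew : ∀ u v, ctf (J u) v = -ctf u (J v)) (i : ι) :
    blockS b J i i = 0 := by
  linarith [blockS_antisymm b hskew i i]

end Blocks

/-- Coordinates of `N_J = 0` on `r₄`, for `J` with blocks `A`, `P`, `S`, `-Aᵀ` (`P`, `S` skew and
written through their entries above the diagonal): `nij_u_v_w` is the `w`-coordinate of
`N_J(u, v)`. -/
structure R4NijenhuisEquations (A P S : Fin 4 → Fin 4 → ℝ) : Prop where
  nij_ξ0_ξ2_e3 : P 0 3 ^ 2 = 0
  nij_ξ0_ξ1_e2 : P 0 2 ^ 2 - P 0 1 * P 0 3 = 0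
  nij_e1_e2_e0 : A 0 1 ^ 2 = 0
  nij_e2_e3_e0 : A 0 2 ^ 2 - A 0 1 * A 0 3 = 0
  nij_e3_ξ0_e1 : 2 * P 0 1 * A 0 3 + P 0 1 * A 0 2 + P 0 2 * A 0 3 = 0
  nij_ξ1_ξ2_e3 : P 0 3 * P 1 3 + 2 * P 0 3 * P 1 2 - P 0 2 * P 2 3 - 2 * P 0 2 * P 1 3
    + 2 * P 0 1 * P 2 3 = 0
  nij_e1_e2_e1 : -2 * P 0 1 * S 1 2 + A 0 2 * A 2 1 - A 0 1 * A 2 2 + A 0 1 * A 1 1 = 0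
  nij_e2_ξ1_e2 : P 0 2 * A 1 1 - P 0 2 * A 2 2 + P 0 1 * A 3 2 - P 0 1 * A 2 1 + A 0 2 * P 1 3
    + 2 * A 0 2 * P 1 2 = 0
  nij_e3_ξ2_e3 : P 0 3 * A 2 2 - P 0 3 * A 3 3 - P 0 2 * A 3 2 + 2 * A 0 3 * P 2 3 = 0
  nij_e1_e2_ξ3 : -2 * A 0 3 * S 1 2 + A 0 2 * S 1 2 + 2 * A 0 2 * S 1 3 - 2 * A 0 1 * S 2 3
    - A 0 1 * S 1 3 = 0
  nij_e2_e3_e2 : -2 * P 0 2 * S 2 3 - P 0 2 * S 1 3 + A 0 3 * A 3 2 - A 0 3 * A 2 1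
    - A 0 2 * A 3 3 + A 0 2 * A 2 2 = 0
  nij_e3_ξ1_e2 : P 0 2 * A 1 2 - P 0 2 * A 2 3 + P 0 1 * A 3 3 - P 0 1 * A 2 2 + A 0 3 * P 1 3
    + 2 * A 0 3 * P 1 2 = 0

/-- `R4NijenhuisEquations` together with coordinates of `J² = -1`: `sq_u_w` is the `w`-coordinate
of `J² u + u`. -/
structure R4BlockEquations (A P S : Fin 4 → Fin 4 → ℝ) : Prop
    extends R4NijenhuisEquations A P S where
  sq_ξ0_e3 : P 2 3 * A 0 2 + P 1 3 * A 0 1 + P 0 3 * A 0 0 - A 3 3 * P 0 3 - A 3 2 * P 0 2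
    - A 3 1 * P 0 1 = 0
  sq_ξ0_e2 : -P 2 3 * A 0 3 + P 1 2 * A 0 1 + P 0 2 * A 0 0 - A 2 3 * P 0 3 - A 2 2 * P 0 2
    - A 2 1 * P 0 1 = 0
  sq_ξ0_e1 : -P 1 3 * A 0 3 - P 1 2 * A 0 2 + P 0 1 * A 0 0 - A 1 3 * P 0 3 - A 1 2 * P 0 2
    - A 1 1 * P 0 1 = 0
  sq_e0_e0 : 1 - P 0 3 * S 0 3 - P 0 2 * S 0 2 - P 0 1 * S 0 1 + A 0 3 * A 3 0 + A 0 2 * A 2 0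
    + A 0 1 * A 1 0 + A 0 0 ^ 2 = 0
  sq_e1_e0 : -P 0 3 * S 1 3 - P 0 2 * S 1 2 + A 0 3 * A 3 1 + A 0 2 * A 2 1 + A 0 1 * A 1 1
    + A 0 0 * A 0 1 = 0
  sq_e1_e1 : 1 - P 1 3 * S 1 3 - P 1 2 * S 1 2 - P 0 1 * S 0 1 + A 1 3 * A 3 1 + A 1 2 * A 2 1
    + A 1 1 ^ 2 + A 0 1 * A 1 0 = 0
  sq_e1_e3 : P 2 3 * S 1 2 - P 0 3 * S 0 1 + A 3 1 * A 3 3 + A 2 1 * A 3 2 + A 1 1 * A 3 1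
    + A 0 1 * A 3 0 = 0
  sq_e2_e2 : 1 - P 2 3 * S 2 3 - P 1 2 * S 1 2 - P 0 2 * S 0 2 + A 2 3 * A 3 2 + A 2 2 ^ 2
    + A 1 2 * A 2 1 + A 0 2 * A 2 0 = 0

variable {A P S : Fin 4 → Fin 4 → ℝ}

theorem R4NijenhuisEquations.p03_p02_a01_a02_eq_zero (h : R4NijenhuisEquations A P S) :
    P 0 3 = 0 ∧ P 0 2 = 0 ∧ A 0 1 = 0 ∧ A 0 2 = 0 := by
  have p03 : P 0 3 = 0 := by simpa using h.nij_ξ0_ξ2_e3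
  have p02 : P 0 2 = 0 := by simpa [p03] using h.nij_ξ0_ξ1_e2
  have a01 : A 0 1 = 0 := by simpa using h.nij_e1_e2_e0
  have a02 : A 0 2 = 0 := by simpa [a01] using h.nij_e2_e3_e0
  exact ⟨p03, p02, a01, a02⟩

theorem R4BlockEquations.false_of_p01_eq_zero (h : R4BlockEquations A P S) (p01 : P 0 1 = 0) :
    False := by
  obtain ⟨p03, p02, a01, a02⟩ := h.p03_p02_a01_a02_eq_zero
  by_cases a03 : A 0 3 = 0
  · have : 1 + A 0 0 ^ 2 = 0 := by simpa [p03, p02, p01, a01, a02, a03] using h.sq_e0_e0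
    exact (by positivity : (0 : ℝ) < 1 + A 0 0 ^ 2).ne' this
  have p23 : P 2 3 = 0 := by simpa [p03, p02, a03] using h.nij_e3_ξ2_e3
  have a31 : A 3 1 = 0 := by simpa [p03, p02, a01, a02, a03] using h.sq_e1_e0
  have a32 : A 3 2 = A 2 1 := mul_left_cancel₀ a03 <| by
    linear_combination h.nij_e2_e3_e2 + (2 * S 2 3 + S 1 3) * p02 + (A 3 3 - A 2 2) * a02
  have a21 : A 2 1 = 0 := by simpa [p23, p03, a31, a01, a32] using h.sq_e1_e3
  have p13 : P 1 3 = 0 := by simpa [p01, p02, p03, a02, a03] using h.sq_ξ0_e1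
  have p12 : P 1 2 = 0 := by simpa [p01, p02, p13, a03] using h.nij_e3_ξ1_e2
  have : 1 + A 1 1 ^ 2 = 0 := by simpa [p01, p12, p13, a01, a31, a21] using h.sq_e1_e1
  exact (by positivity : (0 : ℝ) < 1 + A 1 1 ^ 2).ne' this

theorem R4BlockEquations.false_of_p01_ne_zero (h : R4BlockEquations A P S) (p01 : P 0 1 ≠ 0) :
    False := by
  obtain ⟨p03, p02, a01, a02⟩ := h.p03_p02_a01_a02_eq_zero
  have a03 : A 0 3 = 0 := by simpa [p01, p02, a02] using h.nij_e3_ξ0_e1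
  have p23 : P 2 3 = 0 := by simpa [p01, p02, p03] using h.nij_ξ1_ξ2_e3
  have a31 : A 3 1 = 0 := by simpa [p01, p02, p03, p23, a01, a02] using h.sq_ξ0_e3
  have a21 : A 2 1 = 0 := by simpa [p01, p02, p03, p23, a01, a03] using h.sq_ξ0_e2
  have s12 : S 1 2 = 0 := by simpa [p01, a01, a02] using h.nij_e1_e2_e1
  have a32 : A 3 2 = 0 := by simpa [p01, p02, a02, a21] using h.nij_e2_ξ1_e2
  have : 1 + A 2 2 ^ 2 = 0 := by simpa [p02, p23, s12, a21, a32, a02] using h.sq_e2_e2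
  exact (by positivity : (0 : ℝ) < 1 + A 2 2 ^ 2).ne' this

theorem not_r4BlockEquations : ¬ R4BlockEquations A P S := fun h =>
  (em (P 0 1 = 0)).elim h.false_of_p01_eq_zero h.false_of_p01_ne_zero

section R4

variable {L : Type*} [LieRing L] [LieAlgebra ℝ L] {b : Basis (Fin 4) ℝ L}
  {J : L × Dual ℝ L →ₗ[ℝ] L × Dual ℝ L}

structure IsR4Basis (b : Basis (Fin 4) ℝ L) : Prop where
  lie_01 : ⁅b 0, b 1⁆ = b 1
  lie_02 : ⁅b 0, b 2⁆ = b 1 + b 2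
  lie_03 : ⁅b 0, b 3⁆ = b 2 + b 3
  lie_12 : ⁅b 1, b 2⁆ = 0
  lie_13 : ⁅b 1, b 3⁆ = 0
  lie_23 : ⁅b 2, b 3⁆ = 0

theorem IsR4Basis.lie_eq (hb : IsR4Basis b) (x y : L) :
    ⁅x, y⁆ = (b.repr x 0 * (b.repr y 1 + b.repr y 2) - b.repr y 0 * (b.repr x 1 + b.repr x 2)) • b 1
      + (b.repr x 0 * (b.repr y 2 + b.repr y 3) - b.repr y 0 * (b.repr x 2 + b.repr x 3)) • b 2
      + (b.repr x 0 * b.repr y 3 - b.repr y 0 * b.repr x 3) • b 3 := by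
  conv_lhs => rw [← b.sum_repr x, ← b.sum_repr y]
  simp only [Fin.sum_univ_four, add_lie, lie_add, smul_lie, lie_smul, lie_self,
    ← lie_skew (b _) (b 0), ← lie_skew (b 2) (b 1), ← lie_skew (b 3) (b _),
    hb.lie_01, hb.lie_02, hb.lie_03, hb.lie_12, hb.lie_13, hb.lie_23]
  module

theorem r4NijenhuisEquations_of_nij_eq_zero (hb : IsR4Basis b)
    (hskew : ∀ u v, ctf (J u) v = -ctf u (J v)) (hnij : ∀ u v, nij (J ·) u v = 0) :
    R4NijenhuisEquations (blockA b J) (blockP b J) (blockS b J) := by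
  have hP := blockP_antisymm b hskew
  have hS := blockS_antisymm b hskew
  have hN₁ (u v : L × Dual ℝ L) (k : Fin 4) : b.repr (nij (J ·) u v).1 k = 0 := by simp [hnij]
  have hN₂ (u v : L × Dual ℝ L) (k : Fin 4) : (nij (J ·) u v).2 (b k) = 0 := by simp [hnij]
  have nij_ξ0_ξ2_e3 := hN₁ (0, b.dualBasis 0) (0, b.dualBasis 2) 3
  have nij_ξ0_ξ1_e2 := hN₁ (0, b.dualBasis 0) (0, b.dualBasis 1) 2
  have nij_e1_e2_e0 := hN₁ (b 1, 0) (b 2, 0) 0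
  have nij_e2_e3_e0 := hN₁ (b 2, 0) (b 3, 0) 0
  have nij_e3_ξ0_e1 := hN₁ (b 3, 0) (0, b.dualBasis 0) 1
  have nij_ξ1_ξ2_e3 := hN₁ (0, b.dualBasis 1) (0, b.dualBasis 2) 3
  have nij_e1_e2_e1 := hN₁ (b 1, 0) (b 2, 0) 1
  have nij_e2_ξ1_e2 := hN₁ (b 2, 0) (0, b.dualBasis 1) 2
  have nij_e3_ξ2_e3 := hN₁ (b 3, 0) (0, b.dualBasis 2) 3
  have nij_e1_e2_ξ3 := hN₂ (b 1, 0) (b 2, 0) 3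
  have nij_e2_e3_e2 := hN₁ (b 2, 0) (b 3, 0) 2
  have nij_e3_ξ1_e2 := hN₁ (b 3, 0) (0, b.dualBasis 1) 2
  simp only [nij, ctb, hb.lie_eq, repr_fst_map, snd_map_apply,
    blockD_eq_neg_blockA b hskew, hP 1 0, hP 2 0, hP 3 0, hP 2 1, hP 3 1, hP 3 2,
    hS 1 0, hS 2 0, hS 3 0, hS 2 1, hS 3 1, hS 3 2, blockP_self b hskew, blockS_self b hskew,
    Prod.fst_add, Prod.fst_sub, Prod.snd_add, Prod.snd_sub,
    map_add, map_sub, map_smul, map_zero, Finsupp.add_apply, Finsupp.sub_apply,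
    Finsupp.smul_apply, Finsupp.coe_zero, Pi.zero_apply, LinearMap.add_apply, LinearMap.sub_apply,
    LinearMap.neg_apply, LinearMap.zero_apply, LinearMap.comp_apply, ad_apply,
    Basis.dualBasis_apply_self, Basis.repr_self, Finsupp.single_apply, Fin.sum_univ_four,
    Fin.isValue, Fin.reduceEq, reduceIte, smul_eq_mul, mul_zero, zero_mul, add_zero, zero_add,
    mul_one, sub_zero, zero_sub, neg_zero]
    at nij_ξ0_ξ2_e3 nij_ξ0_ξ1_e2 nij_e1_e2_e0 nij_e2_e3_e0 nij_e3_ξ0_e1 nij_ξ1_ξ2_e3 nij_e1_e2_e1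
      nij_e2_ξ1_e2 nij_e3_ξ2_e3 nij_e1_e2_ξ3 nij_e2_e3_e2 nij_e3_ξ1_e2
  exact ⟨by linear_combination nij_ξ0_ξ2_e3, by linear_combination nij_ξ0_ξ1_e2,
    by linear_combination nij_e1_e2_e0, by linear_combination nij_e2_e3_e0,
    by linear_combination nij_e3_ξ0_e1, by linear_combination nij_ξ1_ξ2_e3,
    by linear_combination nij_e1_e2_e1, by linear_combination nij_e2_ξ1_e2,
    by linear_combination nij_e3_ξ2_e3, by linear_combination nij_e1_e2_ξ3,
    by linear_combination nij_e2_e3_e2, by linear_combination nij_e3_ξ1_e2⟩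

theorem r4BlockEquations_of_sq_eq_neg
    (hN : R4NijenhuisEquations (blockA b J) (blockP b J) (blockS b J))
    (hskew : ∀ u v, ctf (J u) v = -ctf u (J v)) (hJJ : ∀ u, J (J u) = -u) :
    R4BlockEquations (blockA b J) (blockP b J) (blockS b J) := by
  have hP := blockP_antisymm b hskew
  have hS := blockS_antisymm b hskew
  have hsq (u : L × Dual ℝ L) (k : Fin 4) : b.repr (J (J u)).1 k + b.repr u.1 k = 0 := by
    simp [hJJ]
  have sq_ξ0_e3 := hsq (0, b.dualBasis 0) 3
  have sq_ξ0_e2 := hsq (0, b.dualBasis 0) 2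
  have sq_ξ0_e1 := hsq (0, b.dualBasis 0) 1
  have sq_e0_e0 := hsq (b 0, 0) 0
  have sq_e1_e0 := hsq (b 1, 0) 0
  have sq_e1_e1 := hsq (b 1, 0) 1
  have sq_e1_e3 := hsq (b 1, 0) 3
  have sq_e2_e2 := hsq (b 2, 0) 2
  simp only [repr_fst_map, snd_map_apply, blockD_eq_neg_blockA b hskew,
    hP 1 0, hP 2 0, hP 3 0, hP 2 1, hP 3 1, hP 3 2, hS 1 0, hS 2 0, hS 3 0, hS 2 1, hS 3 1, hS 3 2,
    blockP_self b hskew, blockS_self b hskew, map_zero,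
    Finsupp.coe_zero, Pi.zero_apply, LinearMap.zero_apply, Basis.dualBasis_apply_self,
    Basis.repr_self, Finsupp.single_apply, Fin.sum_univ_four, Fin.isValue, Fin.reduceEq, reduceIte,
    mul_zero, zero_mul, add_zero, zero_add]
    at sq_ξ0_e3 sq_ξ0_e2 sq_ξ0_e1 sq_e0_e0 sq_e1_e0 sq_e1_e1 sq_e1_e3 sq_e2_e2
  exact ⟨hN, by linear_combination sq_ξ0_e3, by linear_combination sq_ξ0_e2,
    by linear_combination sq_ξ0_e1, by linear_combination sq_e0_e0,
    by linear_combination sq_e1_e0, by linear_combination sq_e1_e1,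
    by linear_combination sq_e1_e3, by linear_combination sq_e2_e2⟩

end R4

theorem r4_no_generalized_complex_structure_general
    (L : Type*) [LieRing L] [LieAlgebra ℝ L]
    (b : Module.Basis (Fin 4) ℝ L)
    (h01 : ⁅b 0, b 1⁆ = b 1) (h02 : ⁅b 0, b 2⁆ = b 1 + b 2)
    (h03 : ⁅b 0, b 3⁆ = b 2 + b 3)
    (hz : ∀ i j : Fin 4, i < j →
      (i, j) ≠ ((0 : Fin 4), (1 : Fin 4)) →
      (i, j) ≠ ((0 : Fin 4), (2 : Fin 4)) →
      (i, j) ≠ ((0 : Fin 4), (3 : Fin 4)) → ⁅b i, b j⁆ = 0) :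
    ¬ ∃ J : L × Module.Dual ℝ L →ₗ[ℝ] L × Module.Dual ℝ L,
      (∀ u, J (J u) = -u) ∧
      (∀ u v, ctf (J u) (J v) = ctf u v) ∧
      (∀ u v, nij (J ·) u v = 0) := by
  rintro ⟨J, hJJ, horth, hnij⟩
  have hskew := ctf_map_left_eq_neg J hJJ horth
  have hb : IsR4Basis b :=
    ⟨h01, h02, h03, hz 1 2 (by decide) (by decide) (by decide) (by decide),
      hz 1 3 (by decide) (by decide) (by decide) (by decide),
      hz 2 3 (by decide) (by decide) (by decide) (by decide)⟩
  exact not_r4BlockEquations <| r4BlockEquations_of_sq_eq_neg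
    (r4NijenhuisEquations_of_nij_eq_zero hb hskew hnij) hskew hJJ

/-- The Lie algebra `r₄` (`[e₀,e₁]=e₁`, `[e₀,e₂]=e₁+e₂`, `[e₀,e₃]=e₂+e₃`)
admits no generalized complex structure. -/
theorem r4_no_generalized_complex_structure
    (L : Type*) [LieRing L] [LieAlgebra ℝ L] [FiniteDimensional ℝ L]
    (b : Module.Basis (Fin 4) ℝ L)
    (h01 : ⁅b 0, b 1⁆ = b 1) (h02 : ⁅b 0, b 2⁆ = b 1 + b 2)
    (h03 : ⁅b 0, b 3⁆ = b 2 + b 3)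
    (hz : ∀ i j : Fin 4, i < j →
      (i, j) ≠ ((0 : Fin 4), (1 : Fin 4)) →
      (i, j) ≠ ((0 : Fin 4), (2 : Fin 4)) →
      (i, j) ≠ ((0 : Fin 4), (3 : Fin 4)) → ⁅b i, b j⁆ = 0) :
    ¬ ∃ J : L × Module.Dual ℝ L →ₗ[ℝ] L × Module.Dual ℝ L,
      (∀ u, J (J u) = -u) ∧
      (∀ u v, ctf (J u) (J v) = ctf u v) ∧
      (∀ u v, nij (J ·) u v = 0) :=
  r4_no_generalized_complex_structure_general L b h01 h02 h03 hz
end
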